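/- arXiv:2412.12401 — 2 statements merged into one kernel-verified Lean document; each statement's English description precedes it below -/
import Mathlib

section
/- Causality of the chained flow (coordinate dependence): let (B₁,…,Bₙ) be the topological batching of a DAG G on {1,…,d}, and for each j let Tⱼ be a partial causal transformation over Bⱼ whose parent conditioning sets are given by the DAG parents: (Tⱼ(z))ᵢ = fᵢ(zᵢ, (zₖ)_{k ∈ pa(i)}) for i ∈ Bⱼ, and (Tⱼ(z))ᵢ = zᵢ for i ∉ Bⱼ. Let T = Tₙ ∘ … ∘ T₁ and X = T(U). Then for every i ∈ Bⱼ, Xᵢ = fᵢ(Uᵢ, (Xₖ)_{k ∈ pa(i)}); that is, Xᵢ is determined by Uᵢ and the final output values of its parents alone. -/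
/-- Sources of the sub-digraph induced on `s`: vertices of `s` with no predecessor in `s`. -/
def batchSources {V : Type*} [DecidableEq V] (E : V → V → Prop) [DecidableRel E]
    (s : Finset V) : Finset V :=
  s.filter fun v => ∀ u ∈ s, ¬ E u v

/-- Vertices remaining after `k` rounds of topological batching. -/
def batchRemaining {V : Type*} [Fintype V] [DecidableEq V] (E : V → V → Prop)
    [DecidableRel E] : ℕ → Finset V
  | 0 => Finset.univ
  | k + 1 => batchRemaining E k \ batchSources E (batchRemaining E k)

/-- The `k`-th batch (0-indexed) of the topological batching. -/
def batch {V : Type*} [Fintype V] [DecidableEq V] (E : V → V → Prop) [DecidableRel E]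
    (k : ℕ) : Finset V :=
  batchSources E (batchRemaining E k)

/-!
Batch `j` is exactly the set of vertices leaving the remaining set at step `j`, so layer `j`
is the only layer that changes a coordinate of batch `j`: before it the coordinate still
equals `U i`, after it the coordinate is frozen. The parents of a vertex of batch `j` have
already left the remaining set at step `j`, so their values seen by layer `j` are already final.
-/

lemma mem_batchSources {V : Type*} [DecidableEq V] {E : V → V → Prop} [DecidableRel E]
    {s : Finset V} {v : V} : v ∈ batchSources E s ↔ v ∈ s ∧ ∀ u ∈ s, ¬ E u v :=
  Finset.mem_filter

section Batching

variable {V : Type*} [Fintype V] [DecidableEq V] {E : V → V → Prop} [DecidableRel E]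

lemma mem_batch {k : ℕ} {v : V} :
    v ∈ batch E k ↔ v ∈ batchRemaining E k ∧ ∀ u ∈ batchRemaining E k, ¬ E u v :=
  mem_batchSources

lemma batchRemaining_succ (k : ℕ) : batchRemaining E (k + 1) = batchRemaining E k \ batch E k :=
  rfl

lemma batch_subset_batchRemaining (k : ℕ) : batch E k ⊆ batchRemaining E k :=
  fun _ hv => (mem_batch.1 hv).1

lemma batchRemaining_antitone : Antitone (batchRemaining E) :=
  antitone_nat_of_succ_le fun k => by
    rw [batchRemaining_succ]
    exact Finset.sdiff_subset

lemma notMem_batchRemaining_succ_of_mem_batch {k : ℕ} {v : V} (hv : v ∈ batch E k) :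
    v ∉ batchRemaining E (k + 1) := by
  rw [batchRemaining_succ, Finset.mem_sdiff, not_and_not_right]
  exact fun _ => hv

lemma notMem_batch_of_mem_batchRemaining {k m : ℕ} {v : V} (hv : v ∈ batchRemaining E m)
    (hk : k < m) : v ∉ batch E k := fun hvk =>
  notMem_batchRemaining_succ_of_mem_batch hvk (batchRemaining_antitone hk hv)

lemma notMem_batch_of_notMem_batchRemaining {k m : ℕ} {v : V} (hv : v ∉ batchRemaining E m)
    (hk : m ≤ k) : v ∉ batch E k := fun hvk =>
  hv (batchRemaining_antitone hk (batch_subset_batchRemaining k hvk))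

lemma notMem_batchRemaining_of_mem_batch {k : ℕ} {u v : V} (hv : v ∈ batch E k) (huv : E u v) :
    u ∉ batchRemaining E k := fun hu =>
  (mem_batch.1 hv).2 u hu huv

lemma lt_of_mem_batch_of_batchRemaining_eq_empty {k n : ℕ} {v : V} (hv : v ∈ batch E k)
    (hn : batchRemaining E n = ∅) : k < n := by
  by_contra! hnk
  have hvn := batchRemaining_antitone hnk (batch_subset_batchRemaining k hv)
  simp [hn] at hvn

end Batching

section LayeredFlow

variable {V α : Type*} [Fintype V] [DecidableEq V] {E : V → V → Prop} [DecidableRel E]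
  {Z : ℕ → V → α}

lemma apply_eq_apply_of_forall_notMem_batch (hZ : ∀ m, ∀ v ∉ batch E m, Z (m + 1) v = Z m v)
    {v : V} {m m' : ℕ} (hmm' : m ≤ m') (hv : ∀ k, m ≤ k → k < m' → v ∉ batch E k) :
    Z m' v = Z m v := by
  induction m', hmm' using Nat.le_induction with
  | base => rfl
  | succ k hmk ih =>
    rw [hZ k v (hv k hmk k.lt_succ_self), ih fun l hml hlk => hv l hml (hlk.trans k.lt_succ_self)]

lemma apply_eq_apply_zero_of_mem_batchRemaining
    (hZ : ∀ m, ∀ v ∉ batch E m, Z (m + 1) v = Z m v)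
    {v : V} {m : ℕ} (hv : v ∈ batchRemaining E m) : Z m v = Z 0 v :=
  apply_eq_apply_of_forall_notMem_batch hZ m.zero_le fun _ _ hk =>
    notMem_batch_of_mem_batchRemaining hv hk

lemma apply_eq_apply_of_notMem_batchRemaining (hZ : ∀ m, ∀ v ∉ batch E m, Z (m + 1) v = Z m v)
    {v : V} {m m' : ℕ} (hv : v ∉ batchRemaining E m) (hmm' : m ≤ m') : Z m' v = Z m v :=
  apply_eq_apply_of_forall_notMem_batch hZ hmm' fun _ hmk _ =>
    notMem_batch_of_notMem_batchRemaining hv hmk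

end LayeredFlow

theorem chained_flow_causality_general {d : ℕ} (E : Fin d → Fin d → Prop) [DecidableRel E]
    (f : Fin d → ℝ → (Fin d → ℝ) → ℝ)
    (T : ℕ → (Fin d → ℝ) → (Fin d → ℝ))
    (hTin : ∀ j, ∀ z : Fin d → ℝ, ∀ i ∈ batch E j,
      T j z i = f i (z i) (fun k => if E k i then z k else 0))
    (hTout : ∀ j, ∀ z : Fin d → ℝ, ∀ i ∉ batch E j, T j z i = z i)
    (U : Fin d → ℝ) (Z : ℕ → Fin d → ℝ)
    (hZ0 : Z 0 = U) (hZs : ∀ m, Z (m + 1) = T m (Z m))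
    (n : ℕ) (hn : batchRemaining E n = ∅) :
    ∀ j, ∀ i ∈ batch E j,
      Z n i = f i (U i) (fun k => if E k i then Z n k else 0) := by
  intro j i hi
  have hfrozen : ∀ m, ∀ v ∉ batch E m, Z (m + 1) v = Z m v := fun m v hv => by
    rw [hZs, hTout m _ v hv]
  have hjn := lt_of_mem_batch_of_batchRemaining_eq_empty hi hn
  have hinput : Z j i = U i := by
    rw [apply_eq_apply_zero_of_mem_batchRemaining hfrozen (batch_subset_batchRemaining j hi), hZ0]
  have hparents : (fun k => if E k i then Z j k else 0) = fun k => if E k i then Z n k else 0 := by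
    funext k
    split_ifs with hki
    · exact (apply_eq_apply_of_notMem_batchRemaining hfrozen
        (notMem_batchRemaining_of_mem_batch hi hki) hjn.le).symm
    · rfl
  calc Z n i = Z (j + 1) i :=
        apply_eq_apply_of_notMem_batchRemaining hfrozen
          (notMem_batchRemaining_succ_of_mem_batch hi) hjn
    _ = f i (U i) (fun k => if E k i then Z n k else 0) := by
        rw [hZs, hTin j _ i hi, hinput, hparents]

/-- Causality of the chained flow: `X = Tₙ ∘ ⋯ ∘ T₁ (U)` where layer `j` is a partial causal
transformation over the `j`-th batch (0-indexed) of the topological batching of the DAG `E`,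
with coordinate maps `f i` conditioned on the DAG-parents.  Then for every `i` in batch `j`,
`X i = f i (U i) ((X k)_{k ∈ pa i})`: the output `X i` is determined by `U i` and the final
output values of the parents of `i` alone. -/
theorem chained_flow_causality {d : ℕ} (E : Fin d → Fin d → Prop) [DecidableRel E]
    (hacyc : ∀ v : Fin d, ¬ Relation.TransGen E v v)
    (f : Fin d → ℝ → (Fin d → ℝ) → ℝ)
    (T : ℕ → (Fin d → ℝ) → (Fin d → ℝ))
    (hTin : ∀ j, ∀ z : Fin d → ℝ, ∀ i ∈ batch E j,
      T j z i = f i (z i) (fun k => if E k i then z k else 0))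
    (hTout : ∀ j, ∀ z : Fin d → ℝ, ∀ i ∉ batch E j, T j z i = z i)
    (U : Fin d → ℝ) (Z : ℕ → Fin d → ℝ)
    (hZ0 : Z 0 = U) (hZs : ∀ m, Z (m + 1) = T m (Z m))
    (n : ℕ) (hn : batchRemaining E n = ∅) :
    ∀ j, ∀ i ∈ batch E j,
      Z n i = f i (U i) (fun k => if E k i then Z n k else 0) :=
  chained_flow_causality_general E f T hTin hTout U Z hZ0 hZs n hn
end

section
/- Causal consistency of the chained flow: under the chained-flow construction over the topological batching of a DAG G, for each index i, if the parents' final values (Xₖ)_{k∈pa(i)} are held fixed and Uᵢ is held fixed, then Xᵢ is unchanged (in particular under any variation of Uₘ for m ∉ pa(i) ∪ {i}); i.e., Xᵢ is a function of (Uᵢ, (Xₖ)_{k∈pa(i)}) only, so the induced functional dependence graph of the map U ↦ X (expressed recursively through X) coincides with a subgraph of G. -/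
/-- Causal consistency of the chained flow: if two inputs `U, U'` agree on coordinate `i`
and their outputs agree on the parents of `i`, then the outputs agree at `i`; i.e. `X i`
is a function of `(U i, (X k)_{k ∈ pa i})` only. -/
theorem chained_flow_causal_consistency {d : ℕ} (E : Fin d → Fin d → Prop) [DecidableRel E]
    (hacyc : ∀ v : Fin d, ¬ Relation.TransGen E v v)
    (f : Fin d → ℝ → (Fin d → ℝ) → ℝ)
    (T : ℕ → (Fin d → ℝ) → (Fin d → ℝ))
    (hTin : ∀ j, ∀ z : Fin d → ℝ, ∀ i ∈ batch E j,
      T j z i = f i (z i) (fun k => if E k i then z k else 0))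
    (hTout : ∀ j, ∀ z : Fin d → ℝ, ∀ i ∉ batch E j, T j z i = z i)
    (U U' : Fin d → ℝ) (Z Z' : ℕ → Fin d → ℝ)
    (hZ0 : Z 0 = U) (hZs : ∀ m, Z (m + 1) = T m (Z m))
    (hZ0' : Z' 0 = U') (hZs' : ∀ m, Z' (m + 1) = T m (Z' m))
    (n : ℕ) (hn : batchRemaining E n = ∅)
    (i : Fin d) (hUi : U i = U' i)
    (hpar : ∀ k, E k i → Z n k = Z' n k) :
    Z n i = Z' n i := by
  classical
  have hmono : ∀ a b : ℕ, a ≤ b → batchRemaining E b ⊆ batchRemaining E a := by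
    intro a b hab
    induction b with
    | zero =>
      have : a = 0 := Nat.le_zero.mp hab
      subst this; exact subset_rfl
    | succ b ih =>
      rcases Nat.lt_or_ge a (b+1) with h | h
      · exact (Finset.sdiff_subset).trans (ih (Nat.lt_succ_iff.mp h))
      · have : a = b+1 := le_antisymm hab h
        subst this; exact subset_rfl
  have hbatch_sub : ∀ j, batch E j ⊆ batchRemaining E j := by
    intro j v hv
    simp only [batch, batchSources, Finset.mem_filter] at hv
    exact hv.1
  -- if v still remains at step j, its value is the initial one
  have key : ∀ (W : Fin d → ℝ) (Y : ℕ → Fin d → ℝ), Y 0 = W → (∀ m, Y (m+1) = T m (Y m)) →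
      ∀ j v, v ∈ batchRemaining E j → Y j v = W v := by
    intro W Y h0 hs j
    induction j with
    | zero => intro v _; rw [h0]
    | succ j ih =>
      intro v hv
      have hv' : v ∈ batchRemaining E j := hmono j (j+1) (Nat.le_succ j) hv
      have hnb : v ∉ batch E j := by
        simp only [batchRemaining, Finset.mem_sdiff] at hv
        exact hv.2
      rw [hs j, hTout j _ v hnb, ih v hv']
  -- once removed, the value is stable
  have stable : ∀ (Y : ℕ → Fin d → ℝ), (∀ m, Y (m+1) = T m (Y m)) →
      ∀ j v, v ∉ batchRemaining E j → ∀ p, j ≤ p → Y p v = Y j v := by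
    intro Y hs j v hv p hp
    induction p, hp using Nat.le_induction with
    | base => rfl
    | succ p hp ih =>
      have hnb : v ∉ batch E p := fun h => hv (hmono j p hp (hbatch_sub p h))
      rw [hs p, hTout p _ v hnb, ih]
  -- find the batch of i
  have hP : i ∉ batchRemaining E n := by rw [hn]; exact Finset.notMem_empty i
  have hex : ∃ m, i ∉ batchRemaining E m := ⟨n, hP⟩
  have hj0spec0 : i ∉ batchRemaining E (Nat.find hex) := Nat.find_spec hex
  have hj0pos : Nat.find hex ≠ 0 := by
    intro h
    apply hj0spec0
    rw [h]
    simp [batchRemaining]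
  obtain ⟨j, hj⟩ : ∃ j, Nat.find hex = j + 1 :=
    ⟨Nat.find hex - 1, (Nat.succ_pred_eq_of_pos (Nat.pos_of_ne_zero hj0pos)).symm⟩
  have hj0spec : i ∉ batchRemaining E (j + 1) := hj ▸ hj0spec0
  have hmemj : i ∈ batchRemaining E j := by
    by_contra h
    have := Nat.find_min' hex h
    omega
  have hib : i ∈ batch E j := by
    by_contra h
    apply hj0spec
    simp only [batchRemaining, Finset.mem_sdiff]
    exact ⟨hmemj, h⟩
  have hjn : j + 1 ≤ n := by
    by_contra h
    have : i ∈ batchRemaining E n := hmono n j (by omega) hmemj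
    exact hP this
  -- parents of i are not in batchRemaining j
  have hpar_not : ∀ k, E k i → k ∉ batchRemaining E j := by
    intro k hk hkmem
    simp only [batch, batchSources, Finset.mem_filter] at hib
    exact hib.2 k hkmem hk
  have hparj : ∀ k, E k i → Z j k = Z' j k := by
    intro k hk
    have h1 := stable Z hZs j k (hpar_not k hk) n (by omega)
    have h2 := stable Z' hZs' j k (hpar_not k hk) n (by omega)
    rw [← h1, ← h2]
    exact hpar k hk
  have hZi : Z j i = U i := key U Z hZ0 hZs j i hmemj
  have hZi' : Z' j i = U' i := key U' Z' hZ0' hZs' j i hmemj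
  have hstep : Z (j+1) i = Z' (j+1) i := by
    rw [hZs j, hZs' j, hTin j _ i hib, hTin j _ i hib, hZi, hZi', hUi]
    congr 1
    funext k
    by_cases hk : E k i
    · simp [hk, hparj k hk]
    · simp [hk]
  have h1 := stable Z hZs (j+1) i hj0spec n hjn
  have h2 := stable Z' hZs' (j+1) i hj0spec n hjn
  rw [h1, h2, hstep]
end
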